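/- arXiv:2004.04994 — 2 statements merged into one kernel-verified Lean document; each statement's English description precedes it below -/
import Mathlib

section
/- Let d be an odd prime and ω = exp(2πi/d). For the Wootters–Fields bases |ĵ_k⟩ = (1/√d) Σ_{m=0}^{d-1} ω^{jm+km²}|m⟩, any two bases with distinct labels k ≠ k' are mutually unbiased: |⟨ĵ_k | ĵ'_{k'}⟩|² = 1/d for all j, j' ∈ {0,...,d−1}. -/
/-!
Up to the factor `1/d`, the inner product is the generalized quadratic Gauss sum
`S = ∑ₓ ψ(q x)` over `ZMod d`, with `q x = (j' - j) x + (k' - k) x²` and `ψ` the standard additive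
character. Since `q (y + t) - q y = q t + 2 (k' - k) t y`, expanding `|S|² = ∑_{y,t} ψ(q (y + t) - q y)`
and summing over `y` first kills every `t ≠ 0` by orthogonality, because `2 (k' - k)` is a unit
when `d` is an odd prime and `k ≠ k'`. Hence `|S|² = d`.
-/

/-- The Wootters–Fields basis vector `|ĵ_k⟩ = (1/√d) ∑_m ω^(jm+km²) |m⟩` in `ℂ^d`. -/
noncomputable def wfVec (d : ℕ) (k j : Fin d) : EuclideanSpace ℂ (Fin d) :=
  WithLp.toLp 2 fun (m : Fin d) => ((1 / Real.sqrt d : ℝ) : ℂ) *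
    Complex.exp (2 * Real.pi * Complex.I *
      (((j.val * m.val + k.val * m.val ^ 2 : ℕ) : ℂ)) / d)

open Finset Complex ComplexConjugate

namespace AddChar

variable {R : Type*} [CommRing R] [Fintype R] {ψ : AddChar R ℂ}

theorem sq_norm_sum_quadratic (hψ : ψ.IsPrimitive) (b c : R) (hc : IsUnit (2 * c)) :
    ‖∑ x, ψ (b * x + c * x ^ 2)‖ ^ 2 = Fintype.card R := by
  classical
  set q : R → R := fun x => b * x + c * x ^ 2
  have hshift : ∀ y t, q (y + t) - q y = q t + t * (2 * c) * y := fun y t => by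
    simp only [q]; ring
  have horth : ∀ t, ∑ y, ψ (y * (t * (2 * c))) = if t = 0 then (Fintype.card R : ℂ) else 0 := by
    intro t
    rw [sum_mulShift _ hψ]
    simp [hc.mul_left_eq_zero]
  suffices conj (∑ x, ψ (q x)) * ∑ x, ψ (q x) = Fintype.card R by
    rw [conj_mul'] at this; exact_mod_cast this
  calc conj (∑ x, ψ (q x)) * ∑ x, ψ (q x)
      = ∑ y, ∑ t, ψ (q (y + t) - q y) := by
        rw [map_sum, sum_mul_sum]
        refine sum_congr rfl fun y _ => ?_
        rw [← Equiv.sum_comp (Equiv.addLeft y)]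
        simp [sub_eq_neg_add, map_add_eq_mul, map_neg_eq_conj]
    _ = ∑ t, ψ (q t) * ∑ y, ψ (y * (t * (2 * c))) := by
        rw [sum_comm]
        simp only [hshift, map_add_eq_mul, mul_sum, mul_comm, mul_left_comm]
    _ = Fintype.card R := by simp [horth, q]

end AddChar

lemma ZMod.finEquiv_apply (n : ℕ) [NeZero n] (m : Fin n) : ZMod.finEquiv n m = m.val := by
  obtain ⟨n, rfl⟩ := Nat.exists_eq_succ_of_ne_zero (NeZero.ne n)
  exact (Fin.cast_val_eq_self m).symm

section WoottersFields

variable {d : ℕ} [NeZero d]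

lemma wfVec_apply (k j m : Fin d) :
    wfVec d k j m = (√d : ℂ)⁻¹ * ZMod.stdAddChar
      (ZMod.finEquiv d j * ZMod.finEquiv d m + ZMod.finEquiv d k * ZMod.finEquiv d m ^ 2) := by
  have h := ZMod.stdAddChar_coe (N := d) ((j.val * m.val + k.val * m.val ^ 2 : ℕ) : ℤ)
  push_cast at h
  simp [wfVec, ZMod.finEquiv_apply, h]

lemma inner_wfVec (k k' j j' : Fin d) :
    inner ℂ (wfVec d k j) (wfVec d k' j') = (d : ℂ)⁻¹ * ∑ x : ZMod d,
      ZMod.stdAddChar ((ZMod.finEquiv d j' - ZMod.finEquiv d j) * x +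
        (ZMod.finEquiv d k' - ZMod.finEquiv d k) * x ^ 2) := by
  rw [PiLp.inner_apply, ← (ZMod.finEquiv d).toEquiv.sum_comp, mul_sum]
  refine sum_congr rfl fun m _ => ?_
  have hsqrt : (√d : ℂ)⁻¹ * (√d : ℂ)⁻¹ = (d : ℂ)⁻¹ := by
    rw [← mul_inv, ← ofReal_mul, Real.mul_self_sqrt d.cast_nonneg, ofReal_natCast]
  simp only [wfVec_apply, RCLike.inner_apply, map_mul, ← AddChar.map_neg_eq_conj, map_inv₀,
    conj_ofReal]
  rw [mul_mul_mul_comm, hsqrt, ← AddChar.map_add_eq_mul]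
  congr 2
  simp only [RingEquiv.toEquiv_eq_coe, EquivLike.coe_coe]
  ring

end WoottersFields

theorem stmt_5 (d : ℕ) (hd : d.Prime) (hodd : Odd d) (k k' : Fin d) (hkk : k ≠ k')
    (j j' : Fin d) :
    ‖(inner ℂ (wfVec d k j) (wfVec d k' j') : ℂ)‖ ^ 2 = 1 / d := by
  have : Fact d.Prime := ⟨hd⟩
  have htwo : IsUnit (2 : ZMod d) := by
    exact_mod_cast (ZMod.isUnit_iff_coprime 2 d).2 (Nat.coprime_two_left.2 hodd)
  have hunit : IsUnit (2 * (ZMod.finEquiv d k' - ZMod.finEquiv d k)) :=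
    htwo.mul (sub_ne_zero.2 ((ZMod.finEquiv d).injective.ne hkk.symm)).isUnit
  rw [inner_wfVec, norm_mul, mul_pow,
    AddChar.sq_norm_sum_quadratic (ZMod.isPrimitive_stdAddChar d) _ _ hunit, ZMod.card]
  have : (d : ℝ) ≠ 0 := NeZero.ne _
  simp
  field_simp
end

section
/- Let |Φ⟩ = Σ_n λ_n |n⟩⊗|n⟩ with λ_n ≥ 0, Σ_n λ_n² = 1, be a state in ℂ^d⊗ℂ^d with Schmidt coefficients arranged so that λ_{i_0} ≥ λ_{i_1} ≥ ... ≥ λ_{i_{d−1}}. If ρ is a density matrix on ℂ^d⊗ℂ^d with Schmidt number at most r, then F(ρ,Φ) = ⟨Φ|ρ|Φ⟩ ≤ Σ_{m=0}^{r−1} λ_{i_m}². -/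
open Matrix
open scoped ComplexOrder

/-- A pure state `ψ` on `ℂ^d ⊗ ℂ^d` has Schmidt rank at most `r` if it can be written
as a sum of `r` product terms. -/
def SchmidtRankLE (d r : ℕ) (ψ : Fin d × Fin d → ℂ) : Prop :=
  ∃ a b : Fin r → Fin d → ℂ, ∀ p : Fin d × Fin d, ψ p = ∑ i : Fin r, a i p.1 * b i p.2

/-- A mixed state `ρ` on `ℂ^d ⊗ ℂ^d` has Schmidt number at most `r` if it admits a
decomposition into pure states each of Schmidt rank at most `r`. -/
def SchmidtNumberLE (d r : ℕ) (ρ : Matrix (Fin d × Fin d) (Fin d × Fin d) ℂ) : Prop :=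
  ∃ (N : ℕ) (p : Fin N → ℝ) (ψ : Fin N → (Fin d × Fin d → ℂ)),
    (∀ i, 0 ≤ p i) ∧
    (∀ i, star (ψ i) ⬝ᵥ ψ i = 1) ∧
    (∀ i, SchmidtRankLE d r (ψ i)) ∧
    ρ = ∑ i : Fin N, ((p i : ℂ)) • Matrix.vecMulVec (ψ i) (star (ψ i))

/-! If `ψ` has Schmidt rank at most `r`, its rows `ψ(n, ·)` lie in a subspace `K` of dimension
at most `r`. With `P` the orthogonal projection onto `K`, `⟨Φ|ψ⟩ = ∑ₙ λₙ ⟨P eₙ, ψ(n, ·)⟩`, so by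
Cauchy–Schwarz `|⟨Φ|ψ⟩|² ≤ ∑ₙ tₙ λₙ²` with `tₙ = ‖P eₙ‖² ∈ [0, 1]` and `∑ₙ tₙ = dim K ≤ r`.
Such a weighted sum is at most the sum of the `r` largest `λₙ²` (bathtub principle). The
fidelity of a mixture of pure states is the convex combination of their fidelities. -/

open scoped InnerProductSpace

theorem Antitone.sum_mul_le_sum_ite_lt {d : ℕ} (r : ℕ) {w t : Fin d → ℝ} (hw : Antitone w)
    (hw0 : ∀ n, 0 ≤ w n) (ht0 : ∀ n, 0 ≤ t n) (ht1 : ∀ n, t n ≤ 1) (hsum : ∑ n, t n ≤ r) :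
    ∑ n, t n * w n ≤ ∑ n, if n.val < r then w n else 0 := by
  rcases le_or_gt d r with hdr | hrd
  · refine Finset.sum_le_sum fun n _ => ?_
    rw [if_pos (n.isLt.trans_le hdr)]
    exact mul_le_of_le_one_left (hw0 n) (ht1 n)
  · -- compare every weight with the threshold `c`, the largest weight not counted on the right
    let c := w ⟨r, hrd⟩
    have hcard : ∑ n : Fin d, (if n.val < r then (1 : ℝ) else 0) = r := by
      rw [Finset.sum_boole, Fin.card_filter_val_lt, min_eq_right hrd.le]
    have key : ∀ n : Fin d, t n * w n - (if n.val < r then w n else 0)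
        ≤ (t n - if n.val < r then 1 else 0) * c := by
      intro n
      split_ifs with h
      · nlinarith [ht1 n, hw (show n ≤ ⟨r, hrd⟩ from Fin.mk_le_mk.mpr h.le)]
      · nlinarith [ht0 n, hw (show (⟨r, hrd⟩ : Fin d) ≤ n from Fin.le_def.mpr (not_lt.mp h))]
    have := Finset.sum_le_sum fun n (_ : n ∈ Finset.univ) => key n
    rw [Finset.sum_sub_distrib, ← Finset.sum_mul, Finset.sum_sub_distrib, hcard] at this
    nlinarith [hw0 ⟨r, hrd⟩]

theorem OrthonormalBasis.sum_norm_sq_starProjection {ι 𝕜 E : Type*} [Fintype ι] [RCLike 𝕜]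
    [NormedAddCommGroup E] [InnerProductSpace 𝕜 E] (b : OrthonormalBasis ι 𝕜 E)
    (K : Submodule 𝕜 E) [FiniteDimensional 𝕜 K] :
    ∑ i, ‖K.starProjection (b i)‖ ^ 2 = Module.finrank 𝕜 K := by
  let u := stdOrthonormalBasis 𝕜 K
  calc ∑ i, ‖K.starProjection (b i)‖ ^ 2 = ∑ i, ∑ j, ‖⟪b i, (u j : E)⟫_𝕜‖ ^ 2 := by
        refine Finset.sum_congr rfl fun i _ => ?_
        rw [K.starProjection_apply, Submodule.norm_coe,
          ← u.sum_sq_norm_inner_right (K.orthogonalProjectionOnto (b i))]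
        simp only [Submodule.inner_orthogonalProjectionOnto_eq_of_mem_left]
        exact Finset.sum_congr rfl fun j _ => by rw [← inner_conj_symm, RCLike.norm_conj]
    _ = ∑ j, ‖(u j : E)‖ ^ 2 := by
        rw [Finset.sum_comm]
        exact Finset.sum_congr rfl fun j _ => b.sum_sq_norm_inner_right _
    _ = Module.finrank 𝕜 K := by
        simp [Submodule.norm_coe, u.orthonormal.1]

theorem norm_sum_inner_sq_le {ι 𝕜 E : Type*} [RCLike 𝕜] [NormedAddCommGroup E]
    [InnerProductSpace 𝕜 E] (s : Finset ι) (x y : ι → E) :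
    ‖∑ i ∈ s, ⟪x i, y i⟫_𝕜‖ ^ 2 ≤ (∑ i ∈ s, ‖x i‖ ^ 2) * ∑ i ∈ s, ‖y i‖ ^ 2 := by
  calc ‖∑ i ∈ s, ⟪x i, y i⟫_𝕜‖ ^ 2 ≤ (∑ i ∈ s, ‖x i‖ * ‖y i‖) ^ 2 := by
        gcongr
        exact (norm_sum_le _ _).trans (Finset.sum_le_sum fun i _ => norm_inner_le_norm _ _)
    _ ≤ (∑ i ∈ s, ‖x i‖ ^ 2) * ∑ i ∈ s, ‖y i‖ ^ 2 := Finset.sum_mul_sq_le_sq_mul_sq _ _ _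

theorem SchmidtRankLE.exists_rows_mem {d r : ℕ} {ψ : Fin d × Fin d → ℂ}
    (hψ : SchmidtRankLE d r ψ) :
    ∃ K : Submodule ℂ (EuclideanSpace ℂ (Fin d)), Module.finrank ℂ K ≤ r ∧
      ∀ n, WithLp.toLp 2 (Function.curry ψ n) ∈ K := by
  obtain ⟨a, b, hab⟩ := hψ
  let b' : Fin r → EuclideanSpace ℂ (Fin d) := fun i => WithLp.toLp 2 (b i)
  refine ⟨Submodule.span ℂ (Set.range b'), by
    simpa [Set.finrank] using finrank_range_le_card (R := ℂ) b',
    fun n => ?_⟩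
  have hrow : WithLp.toLp 2 (Function.curry ψ n) = ∑ i, a i n • b' i := by
    ext m
    simp [b', hab]
  rw [hrow]
  exact Submodule.sum_mem _ fun i _ =>
    Submodule.smul_mem _ _ (Submodule.subset_span (Set.mem_range_self i))

theorem norm_sum_mul_diag_sq_le_of_rows_mem {ι : Type*} [Fintype ι] [DecidableEq ι]
    (K : Submodule ℂ (EuclideanSpace ℂ ι)) [FiniteDimensional ℂ K] (lam : ι → ℝ)
    (ψ : ι × ι → ℂ) (hψ : ∀ n, WithLp.toLp 2 (Function.curry ψ n) ∈ K) :
    ‖∑ n, (lam n : ℂ) * ψ (n, n)‖ ^ 2 ≤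
      (∑ n, ‖K.starProjection (EuclideanSpace.single n 1)‖ ^ 2 * lam n ^ 2) *
        ∑ p, ‖ψ p‖ ^ 2 := by
  have hdiag : ∀ n, (lam n : ℂ) * ψ (n, n) =
      ⟪(lam n : ℂ) • K.starProjection (EuclideanSpace.single n 1),
        WithLp.toLp 2 (Function.curry ψ n)⟫_ℂ := by
    intro n
    rw [inner_smul_left, Submodule.inner_starProjection_left_eq_right,
      K.starProjection_eq_self_iff.mpr (hψ n), EuclideanSpace.inner_single_left]
    simp
  simp only [hdiag]
  convert norm_sum_inner_sq_le _ _ _ using 2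
  · refine Finset.sum_congr rfl fun n _ => ?_
    rw [norm_smul, mul_pow, Complex.norm_real, Real.norm_eq_abs, sq_abs, mul_comm]
  · rw [Fintype.sum_prod_type]
    refine Finset.sum_congr rfl fun n _ => ?_
    rw [EuclideanSpace.norm_sq_eq]
    rfl

theorem SchmidtRankLE.norm_sum_mul_diag_sq_le {d r : ℕ} {ψ : Fin d × Fin d → ℂ}
    (hψ : SchmidtRankLE d r ψ) {lam : Fin d → ℝ} (hlam0 : ∀ n, 0 ≤ lam n)
    (hlam : Antitone lam) :
    ‖∑ n, (lam n : ℂ) * ψ (n, n)‖ ^ 2 ≤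
      (∑ n, if n.val < r then lam n ^ 2 else 0) * ∑ p, ‖ψ p‖ ^ 2 := by
  obtain ⟨K, hK, hrows⟩ := hψ.exists_rows_mem
  refine (norm_sum_mul_diag_sq_le_of_rows_mem K lam ψ hrows).trans
    (mul_le_mul_of_nonneg_right ?_ (by positivity))
  refine Antitone.sum_mul_le_sum_ite_lt r
    (fun i j hij => pow_le_pow_left₀ (hlam0 j) (hlam hij) 2) (fun n => sq_nonneg _)
    (fun n => sq_nonneg _) (fun n => ?_) ?_
  · calc ‖K.starProjection (EuclideanSpace.single n 1)‖ ^ 2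
        ≤ ‖(EuclideanSpace.single n 1 : EuclideanSpace ℂ (Fin d))‖ ^ 2 := by
          gcongr; exact K.norm_starProjection_apply_le _
      _ = 1 := by simp
  · have := (EuclideanSpace.basisFun (Fin d) ℂ).sum_norm_sq_starProjection K
    simp only [EuclideanSpace.basisFun_apply] at this
    rw [this]
    exact_mod_cast hK

theorem star_dotProduct_eq_sum_diag {ι : Type*} [Fintype ι] [DecidableEq ι] (lam : ι → ℝ)
    {Φ : ι × ι → ℂ} (hΦ : ∀ p : ι × ι, Φ p = if p.1 = p.2 then (lam p.1 : ℂ) else 0)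
    (ψ : ι × ι → ℂ) :
    star Φ ⬝ᵥ ψ = ∑ n, (lam n : ℂ) * ψ (n, n) := by
  simp [dotProduct, hΦ, Fintype.sum_prod_type, apply_ite]

theorem star_dotProduct_self_eq_sum_norm_sq {n : Type*} [Fintype n] (ψ : n → ℂ) :
    star ψ ⬝ᵥ ψ = (∑ q, ‖ψ q‖ ^ 2 : ℝ) := by
  simp [dotProduct, Complex.conj_mul']

theorem star_dotProduct_vecMulVec_star_mulVec {n : Type*} [Fintype n] (ψ Φ : n → ℂ) :
    star Φ ⬝ᵥ vecMulVec ψ (star ψ) *ᵥ Φ = (‖star Φ ⬝ᵥ ψ‖ ^ 2 : ℝ) := by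
  rw [vecMulVec_mulVec, dotProduct_smul, MulOpposite.smul_eq_mul_unop, MulOpposite.unop_op,
    star_dotProduct ψ Φ, RCLike.star_def, Complex.mul_conj']
  norm_cast

theorem re_star_dotProduct_sum_smul_vecMulVec_mulVec {ι n : Type*} [Fintype ι] [Fintype n]
    (p : ι → ℝ) (ψ : ι → n → ℂ) (Φ : n → ℂ) :
    (star Φ ⬝ᵥ (∑ i, (p i : ℂ) • vecMulVec (ψ i) (star (ψ i))) *ᵥ Φ).re =
      ∑ i, p i * ‖star Φ ⬝ᵥ ψ i‖ ^ 2 := by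
  simp only [Matrix.sum_mulVec, dotProduct_sum, Matrix.smul_mulVec, dotProduct_smul,
    star_dotProduct_vecMulVec_star_mulVec, smul_eq_mul, ← Complex.ofReal_mul, Complex.re_sum,
    Complex.ofReal_re]

theorem stmt_10_general (d r : ℕ)
    (lam : Fin d → ℝ) (hlam : ∀ n, 0 ≤ lam n)
    (hsorted : ∀ i j : Fin d, i ≤ j → lam j ≤ lam i)
    (Φ : Fin d × Fin d → ℂ)
    (hΦ : ∀ p : Fin d × Fin d, Φ p = if p.1 = p.2 then ((lam p.1 : ℝ) : ℂ) else 0)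
    (ρ : Matrix (Fin d × Fin d) (Fin d × Fin d) ℂ)
    (htr : ρ.trace = 1)
    (hSN : SchmidtNumberLE d r ρ) :
    (star Φ ⬝ᵥ ρ *ᵥ Φ).re ≤ ∑ m : Fin d, (if m.val < r then lam m ^ 2 else 0) := by
  obtain ⟨N, p, ψ, hp, hψ1, hψr, rfl⟩ := hSN
  have hp1 : ∑ i, p i = 1 := by
    have : ∑ i, (p i : ℂ) = 1 := by
      simpa [trace_sum, trace_smul, dotProduct_comm _ (star _), hψ1] using htr
    exact_mod_cast this
  have hψnorm : ∀ i, ∑ q, ‖ψ i q‖ ^ 2 = 1 := fun i => by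
    exact_mod_cast (star_dotProduct_self_eq_sum_norm_sq (ψ i)).symm.trans (hψ1 i)
  rw [re_star_dotProduct_sum_smul_vecMulVec_mulVec]
  calc ∑ i, p i * ‖star Φ ⬝ᵥ ψ i‖ ^ 2
      ≤ ∑ i, p i * ∑ m : Fin d, (if m.val < r then lam m ^ 2 else 0) := by
        gcongr with i
        · exact hp i
        simpa [star_dotProduct_eq_sum_diag lam hΦ, hψnorm i] using
          (hψr i).norm_sum_mul_diag_sq_le hlam hsorted
    _ = ∑ m : Fin d, (if m.val < r then lam m ^ 2 else 0) := by
        rw [← Finset.sum_mul, hp1, one_mul]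

theorem stmt_10 (d r : ℕ) (hd : 0 < d)
    (lam : Fin d → ℝ) (hlam : ∀ n, 0 ≤ lam n) (hnorm : ∑ n : Fin d, lam n ^ 2 = 1)
    (hsorted : ∀ i j : Fin d, i ≤ j → lam j ≤ lam i)
    (Φ : Fin d × Fin d → ℂ)
    (hΦ : ∀ p : Fin d × Fin d, Φ p = if p.1 = p.2 then ((lam p.1 : ℝ) : ℂ) else 0)
    (ρ : Matrix (Fin d × Fin d) (Fin d × Fin d) ℂ)
    (hρ : ρ.PosSemidef) (htr : ρ.trace = 1)
    (hSN : SchmidtNumberLE d r ρ) :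
    (star Φ ⬝ᵥ ρ *ᵥ Φ).re ≤ ∑ m : Fin d, (if m.val < r then lam m ^ 2 else 0) :=
  stmt_10_general d r lam hlam hsorted Φ hΦ ρ htr hSN
end
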